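/- Let A₁ = [[0,2],[0,0]], A₂ = [1], and A = A₁ ⊕ A₂ ∈ M₃(ℂ). Then z = 1 lies on the boundary of F(A) (which equals the closed disk of radius 1 centered at 0), the vector e₃ = [0,0,1]ᵀ satisfies e₃*Ae₃ = 1, but every unit vector x with x*Ax = ζ for ζ ∈ ∂F(A), ζ ≠ 1, has third coordinate zero and hence ‖x − ωe₃‖ ≥ √2 for all unimodular ω. Therefore f_A⁻¹ is not strongly continuous at z = 1. -/

import Mathlib

/-!
For a unit vector `x`, `x* A x = 2 x̄₀ x₁ + |x₂|²` with `|2 x̄₀ x₁| ≤ |x₀|² + |x₁|² = 1 - |x₂|²`, so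
`F(A)` is the unit disk, and a unimodular value `ζ` with `x₂ ≠ 0` forces equality in the triangle
inequality, i.e. `ζ = 1`. Preimages of boundary points `ζ ≠ 1` are therefore orthogonal to `e₃`,
so they all lie at projective distance `√2` from `e₃`, while such `ζ` accumulate at `1`.
-/

open Matrix

/-- The field of values generating function `f_A(x) = x* A x`. -/
noncomputable def fA {m : Type*} [Fintype m] (A : Matrix m m ℂ) (x : m → ℂ) : ℂ :=
  star x ⬝ᵥ A.mulVec x

/-- The numerical range (field of values) of `A`. -/
def NR {m : Type*} [Fintype m] (A : Matrix m m ℂ) : Set ℂ :=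
  {z | ∃ x, star x ⬝ᵥ x = 1 ∧ fA A x = z}

/-- Euclidean norm on `m → ℂ`. -/
noncomputable def enorm {m : Type*} [Fintype m] (x : m → ℂ) : ℝ :=
  Real.sqrt (∑ i, ‖x i‖ ^ 2)

/-- Projective distance: infimum of `‖x - ω • y‖` over unimodular `ω`. -/
noncomputable def projDist {m : Type*} [Fintype m] (x y : m → ℂ) : ℝ :=
  sInf {d | ∃ ω : ℂ, ‖ω‖ = 1 ∧ d = _root_.enorm (x - ω • y)}

section Orthonormal

variable {m : Type*} [Fintype m]

lemma enorm_eq_norm_toLp (x : m → ℂ) : _root_.enorm x = ‖WithLp.toLp 2 x‖ := by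
  rw [EuclideanSpace.norm_eq]; rfl

lemma star_dotProduct_eq_inner (x y : m → ℂ) :
    star x ⬝ᵥ y = inner ℂ (WithLp.toLp 2 x) (WithLp.toLp 2 y) := by
  rw [EuclideanSpace.inner_toLp_toLp, dotProduct_comm]

lemma star_dotProduct_self_eq_one_iff (x : m → ℂ) :
    star x ⬝ᵥ x = 1 ↔ _root_.enorm x = 1 := by
  rw [star_dotProduct_eq_inner, inner_self_eq_norm_sq_to_K, enorm_eq_norm_toLp]
  rw [← RCLike.ofReal_pow, ← RCLike.ofReal_one, RCLike.ofReal_inj,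
    pow_eq_one_iff_of_nonneg (norm_nonneg _) two_ne_zero]

lemma enorm_sub_smul_of_orthonormal {x y : m → ℂ} (hx : star x ⬝ᵥ x = 1) (hy : star y ⬝ᵥ y = 1)
    (hxy : star x ⬝ᵥ y = 0) {ω : ℂ} (hω : ‖ω‖ = 1) :
    _root_.enorm (x - ω • y) = √2 := by
  rw [star_dotProduct_self_eq_one_iff, enorm_eq_norm_toLp] at hx hy
  rw [star_dotProduct_eq_inner] at hxy
  rw [enorm_eq_norm_toLp, WithLp.toLp_sub, WithLp.toLp_smul, ← Real.sqrt_sq (norm_nonneg _),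
    @norm_sub_sq ℂ, inner_smul_right, hxy, norm_smul, hx, hy, hω]
  norm_num

lemma projDist_of_orthonormal {x y : m → ℂ} (hx : star x ⬝ᵥ x = 1) (hy : star y ⬝ᵥ y = 1)
    (hxy : star x ⬝ᵥ y = 0) : projDist x y = √2 := by
  have : {d | ∃ ω : ℂ, ‖ω‖ = 1 ∧ d = _root_.enorm (x - ω • y)} = {√2} := by
    ext d
    refine ⟨fun ⟨ω, hω, hd⟩ ↦ hd ▸ enorm_sub_smul_of_orthonormal hx hy hxy hω, fun hd ↦ ?_⟩
    exact ⟨1, norm_one, (hd.trans (enorm_sub_smul_of_orthonormal hx hy hxy norm_one).symm)⟩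
  rw [projDist, this, csInf_singleton]

end Orthonormal

lemma exists_two_mul_conj_mul_eq {z : ℂ} (hz : ‖z‖ ≤ 1) :
    ∃ a b : ℂ, ‖a‖ ^ 2 + ‖b‖ ^ 2 = 1 ∧ 2 * starRingEnd ℂ a * b = z := by
  -- `a = √((1 + s) / 2)` with `s = √(1 - ‖z‖²)` is real and positive, and `b = z / (2 a)`.
  set s := √(1 - ‖z‖ ^ 2)
  have hs : s ^ 2 = 1 - ‖z‖ ^ 2 := Real.sq_sqrt (by nlinarith [norm_nonneg z])
  have hs0 : 0 ≤ s := Real.sqrt_nonneg _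
  set a := √((1 + s) / 2)
  have ha : a ^ 2 = (1 + s) / 2 := Real.sq_sqrt (by positivity)
  have ha0 : 0 < a := Real.sqrt_pos.mpr (by positivity)
  refine ⟨a, z / (2 * a), ?_, ?_⟩
  · rw [norm_div, norm_mul, Complex.norm_real, Complex.norm_two, Real.norm_of_nonneg ha0.le,
      div_pow, mul_pow, ha]
    field_simp
    nlinarith
  · have : (a : ℂ) ≠ 0 := Complex.ofReal_ne_zero.mpr ha0.ne'
    rw [Complex.conj_ofReal]
    field_simp

local notation "𝒜" => (!![0, 2, 0; 0, 0, 0; 0, 0, 1] : Matrix (Fin 3) (Fin 3) ℂ)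

lemma star_dotProduct_self_fin_three (x : Fin 3 → ℂ) :
    star x ⬝ᵥ x = ((‖x 0‖ ^ 2 + ‖x 1‖ ^ 2 + ‖x 2‖ ^ 2 : ℝ) : ℂ) := by
  simp [dotProduct, Fin.sum_univ_three, Complex.conj_mul']

lemma star_dotProduct_self_fin_three_eq_one_iff (x : Fin 3 → ℂ) :
    star x ⬝ᵥ x = 1 ↔ ‖x 0‖ ^ 2 + ‖x 1‖ ^ 2 + ‖x 2‖ ^ 2 = 1 := by
  rw [star_dotProduct_self_fin_three]
  exact_mod_cast Iff.rfl

lemma fA_eq (x : Fin 3 → ℂ) :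
    fA 𝒜 x = 2 * starRingEnd ℂ (x 0) * x 1 + ((‖x 2‖ ^ 2 : ℝ) : ℂ) := by
  simp [fA, dotProduct, Matrix.mulVec, Fin.sum_univ_three, Complex.conj_mul']
  ring

lemma norm_two_mul_conj_mul_le {x : Fin 3 → ℂ} (hx : ‖x 0‖ ^ 2 + ‖x 1‖ ^ 2 + ‖x 2‖ ^ 2 = 1) :
    ‖2 * starRingEnd ℂ (x 0) * x 1‖ ≤ 1 - ‖x 2‖ ^ 2 := by
  rw [norm_mul, norm_mul, Complex.norm_conj, Complex.norm_two]
  nlinarith [sq_nonneg (‖x 0‖ - ‖x 1‖)]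

lemma norm_fA_le_one {x : Fin 3 → ℂ} (hx : star x ⬝ᵥ x = 1) : ‖fA 𝒜 x‖ ≤ 1 := by
  rw [star_dotProduct_self_fin_three_eq_one_iff] at hx
  calc ‖fA 𝒜 x‖ ≤ ‖2 * starRingEnd ℂ (x 0) * x 1‖ + ‖((‖x 2‖ ^ 2 : ℝ) : ℂ)‖ :=
        fA_eq x ▸ norm_add_le _ _
    _ ≤ 1 := by
        rw [Complex.norm_real, Real.norm_of_nonneg (by positivity)]
        linarith [norm_two_mul_conj_mul_le hx]

lemma NR_eq_closedBall : NR 𝒜 = Metric.closedBall 0 1 := by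
  ext z
  rw [mem_closedBall_zero_iff]
  constructor
  · rintro ⟨x, hx, rfl⟩
    exact norm_fA_le_one hx
  · intro hz
    obtain ⟨a, b, hab, rfl⟩ := exists_two_mul_conj_mul_eq hz
    refine ⟨![a, b, 0], ?_, ?_⟩
    · rw [star_dotProduct_self_fin_three_eq_one_iff]
      simpa using hab
    · simp [fA_eq]

lemma frontier_NR : frontier (NR 𝒜) = Metric.sphere 0 1 := by
  rw [NR_eq_closedBall, frontier_closedBall _ one_ne_zero]

-- With `u = 2 x̄₀ x₁` and `t = ‖x 2‖² > 0`, equality in `‖u + t‖ ≤ ‖u‖ + t ≤ 1` forces `u = 1 - t`.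
lemma third_eq_zero_of_norm_fA_eq_one {x : Fin 3 → ℂ} (hx : star x ⬝ᵥ x = 1)
    (hnorm : ‖fA 𝒜 x‖ = 1) (hne : fA 𝒜 x ≠ 1) : x 2 = 0 := by
  rw [star_dotProduct_self_fin_three_eq_one_iff] at hx
  set u := 2 * starRingEnd ℂ (x 0) * x 1
  set t := ‖x 2‖ ^ 2
  have hfA : fA 𝒜 x = u + t := fA_eq x
  have hu : u.re ^ 2 + u.im ^ 2 ≤ (1 - t) ^ 2 := by
    have := Complex.sq_norm u
    rw [Complex.normSq_apply] at this
    nlinarith [norm_two_mul_conj_mul_le hx, norm_nonneg u]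
  have hut : (u.re + t) ^ 2 + u.im ^ 2 = 1 := by
    have := Complex.sq_norm (fA 𝒜 x)
    rw [hnorm, hfA, Complex.normSq_apply] at this
    simp only [Complex.add_re, Complex.add_im, Complex.ofReal_re, Complex.ofReal_im] at this
    nlinarith
  by_contra h2
  have ht : 0 < t := by positivity
  have hre : u.re = 1 - t := by nlinarith
  have him : u.im = 0 := by nlinarith
  exact hne (by rw [hfA]; apply Complex.ext <;> simp [hre, him])

lemma exists_norm_eq_one_ne_one_norm_sub_lt {δ : ℝ} (hδ : 0 < δ) :
    ∃ z : ℂ, ‖z‖ = 1 ∧ z ≠ 1 ∧ ‖1 - z‖ < δ := by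
  set t := min (δ / 2) 1
  have ht : 0 < t := lt_min (half_pos hδ) one_pos
  refine ⟨Complex.exp (Complex.I * t), ?_, fun h ↦ ?_, ?_⟩
  · rw [mul_comm]; exact Complex.norm_exp_ofReal_mul_I t
  · have hsin : 0 < Real.sin t :=
      Real.sin_pos_of_pos_of_lt_pi ht ((min_le_right _ _).trans_lt (by linarith [Real.pi_gt_three]))
    have := congrArg Complex.im h
    rw [mul_comm, Complex.exp_ofReal_mul_I_im] at this
    simp [this] at hsin
  · calc ‖1 - Complex.exp (Complex.I * t)‖ ≤ ‖t‖ := by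
          rw [norm_sub_rev]; exact Real.norm_exp_I_mul_ofReal_sub_one_le
      _ < δ := by
          rw [Real.norm_of_nonneg ht.le]; linarith [min_le_left (δ / 2) 1]

theorem concrete_3x3_not_strongly_continuous :
    let A : Matrix (Fin 3) (Fin 3) ℂ := !![0,2,0; 0,0,0; 0,0,1]
    let e₃ : Fin 3 → ℂ := ![0,0,1]
    NR A = Metric.closedBall (0:ℂ) 1 ∧
    (1:ℂ) ∈ frontier (NR A) ∧
    fA A e₃ = 1 ∧
    (∀ x : Fin 3 → ℂ, star x ⬝ᵥ x = 1 → ∀ ζ ∈ frontier (NR A), ζ ≠ 1 →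
      fA A x = ζ → x 2 = 0 ∧ ∀ ω : ℂ, ‖ω‖ = 1 → Real.sqrt 2 ≤ _root_.enorm (x - ω • e₃)) ∧
    ¬ (∀ ε > (0:ℝ), ∃ δ > (0:ℝ), ∀ z' ∈ NR A, ‖1 - z'‖ < δ →
        ∃ x', star x' ⬝ᵥ x' = 1 ∧ fA A x' = z' ∧ projDist e₃ x' < ε) := by
  intro A e₃
  have he₃ : star e₃ ⬝ᵥ e₃ = 1 := by simp [e₃, dotProduct, Fin.sum_univ_three]
  have horth : ∀ x : Fin 3 → ℂ, x 2 = 0 → star x ⬝ᵥ e₃ = 0 ∧ star e₃ ⬝ᵥ x = 0 := fun x h2 ↦ by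
    simp [e₃, dotProduct, Fin.sum_univ_three, h2]
  refine ⟨NR_eq_closedBall, by simp [A, frontier_NR], by simp [A, e₃, fA_eq], ?_, ?_⟩
  · intro x hx ζ hζ hζ1 hfx
    rw [frontier_NR, mem_sphere_zero_iff_norm, ← hfx] at hζ
    have h2 := third_eq_zero_of_norm_fA_eq_one hx hζ (hfx ▸ hζ1)
    exact ⟨h2, fun ω hω ↦ (enorm_sub_smul_of_orthonormal hx he₃ (horth x h2).1 hω).ge⟩
  · intro h
    obtain ⟨δ, hδ, h⟩ := h √2 (by positivity)
    obtain ⟨z, hz, hz1, hzδ⟩ := exists_norm_eq_one_ne_one_norm_sub_lt hδ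
    have hzNR : z ∈ NR A := by simp [A, NR_eq_closedBall, hz]
    obtain ⟨x, hx, rfl, hdist⟩ := h z hzNR hzδ
    have h2 := third_eq_zero_of_norm_fA_eq_one hx hz hz1
    rw [projDist_of_orthonormal he₃ hx (horth x h2).2] at hdist
    exact lt_irrefl _ hdist
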